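/- Forney indices of an MDS convolutional code: Let F_q be a finite field and let G ∈ F_q[z]^{k×n} (1 ≤ k < n) be right invertible and minimal with row degrees ν_1,…,ν_k and complexity δ = ν_1 + … + ν_k. Suppose the free distance d = min{ wt(uG) : u ∈ F_q[z]^k, u ≠ 0 } equals the generalized Singleton bound S(n,k,δ) = (n-k)(⌊δ/k⌋+1)+δ+1. Write δ = ak + r with integers a ≥ 0 and 0 ≤ r ≤ k-1. Then exactly k - r of the row degrees ν_1,…,ν_k equal a and exactly r of them equal a + 1. -/

import Mathlib

/-! Over any field, a codeword whose entries have degree at most `m` has weight at most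
`n (m + 1)`, less the number of coefficients in that range known to vanish. A single row of `G`
thus gives `d ≤ n (ν_i + 1)`, and the Singleton value of `d` forces `a ≤ ν_i` for every `i`.
If `s` rows have degree `a`, their constant combinations form an `s`-dimensional space of
codewords of degree at most `a`, so a nonzero one kills `s - 1` prescribed coefficients and
`d ≤ n (a + 1) - (s - 1)`, i.e. `s ≤ k - r`. The excesses `ν_i - a` sum to `r`, so at most `r`
of them are nonzero; hence exactly `r` are, and each of those equals `1`. -/

open Polynomial Matrix

/-- The weight of a vector of polynomials: the total number of nonzero coefficients
occurring in its polynomial entries. -/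
def polyWt {F : Type*} [Field F] {n : ℕ} (v : Fin n → Polynomial F) : ℕ :=
  ∑ j, (v j).support.card

/-- The complexity of a polynomial generator matrix `G ∈ F[z]^{k×n}`:
the maximal degree of its `k×k` minors. -/
noncomputable def complexity {F : Type*} [Field F] {k n : ℕ}
    (G : Matrix (Fin k) (Fin n) (Polynomial F)) : ℕ :=
  Finset.univ.sup fun f : Fin k ↪ Fin n => ((G.submatrix id ⇑f).det).natDegree

/-- The `r`-th row degree of a polynomial matrix: the maximal degree of the
polynomial entries in row `r`. -/
noncomputable def rowDeg {F : Type*} [Field F] {k n : ℕ}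
    (G : Matrix (Fin k) (Fin n) (Polynomial F)) (r : Fin k) : ℕ :=
  Finset.univ.sup fun j => (G r j).natDegree

open Finset

section Weight

variable {F : Type*} [Field F] {n : ℕ}

theorem polyWt_eq_card_sigma (v : Fin n → F[X]) :
    polyWt v = #(univ.sigma fun j => (v j).support) := by
  rw [card_sigma]
  rfl

theorem polyWt_add_card_le {v : Fin n → F[X]} {m : ℕ} (hv : ∀ j, (v j).natDegree ≤ m)
    {T : Finset (Σ _ : Fin n, ℕ)} (hT : T ⊆ univ.sigma fun _ => range (m + 1))
    (hvan : ∀ p ∈ T, (v p.1).coeff p.2 = 0) : polyWt v + #T ≤ n * (m + 1) := by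
  have hdisj : Disjoint (univ.sigma fun j => (v j).support) T :=
    disjoint_right.mpr fun p hp hsupp => mem_support_iff.mp (mem_sigma.mp hsupp).2 (hvan p hp)
  have hsub : (univ.sigma fun j => (v j).support) ∪ T ⊆ univ.sigma fun _ => range (m + 1) :=
    union_subset (sigma_mono subset_rfl fun j => supp_subset_range (Nat.lt_succ_of_le (hv j))) hT
  calc polyWt v + #T = #((univ.sigma fun j => (v j).support) ∪ T) := by
        rw [polyWt_eq_card_sigma, card_union_of_disjoint hdisj]
    _ ≤ #(univ.sigma fun _ : Fin n => range (m + 1)) := card_le_card hsub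
    _ = n * (m + 1) := by simp [card_sigma]

theorem natDegree_le_rowDeg {k : ℕ} (G : Matrix (Fin k) (Fin n) F[X]) (i : Fin k) (j : Fin n) :
    (G i j).natDegree ≤ rowDeg G i :=
  le_sup (f := fun j => (G i j).natDegree) (mem_univ j)

theorem polyWt_row_le {k : ℕ} (G : Matrix (Fin k) (Fin n) F[X]) (i : Fin k) :
    polyWt (G i) ≤ n * (rowDeg G i + 1) := by
  simpa using polyWt_add_card_le (natDegree_le_rowDeg G i) (empty_subset _) (by simp)

theorem le_mul_rowDeg_succ_of_forall_le_polyWt {k d : ℕ} {G : Matrix (Fin k) (Fin n) F[X]}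
    (hd : ∀ u : Fin k → F[X], u ≠ 0 → d ≤ polyWt (u ᵥ* G)) (i : Fin k) :
    d ≤ n * (rowDeg G i + 1) := by
  have h := hd (Pi.single i 1) (by simp)
  rw [single_one_vecMul] at h
  exact h.trans (polyWt_row_le G i)

end Weight

theorem Matrix.exists_ne_zero_vecMul_eq_zero {K m p : Type*} [Field K] [Fintype m] [Fintype p]
    (A : Matrix m p K) (h : Fintype.card p < Fintype.card m) : ∃ c ≠ 0, c ᵥ* A = 0 := by
  obtain ⟨c, hc, hc0⟩ := (Submodule.ne_bot_iff _).mp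
    (LinearMap.ker_ne_bot_of_finrank_lt (f := A.vecMulLinear) (by simpa using h))
  exact ⟨c, hc0, hc⟩

theorem coeff_C_vecMul {F m p : Type*} [Field F] [Fintype m] (c : m → F)
    (G : Matrix m p F[X]) (j : p) (e : ℕ) :
    (((fun i => C (c i)) ᵥ* G) j).coeff e = ∑ i, c i * (G i j).coeff e := by
  simp [vecMul, dotProduct, coeff_C_mul]

theorem exists_ne_zero_polyWt_vecMul_add_card_le {F : Type*} [Field F] {k n m : ℕ}
    (G : Matrix (Fin k) (Fin n) F[X]) {S : Finset (Fin k)} (hdeg : ∀ i ∈ S, rowDeg G i ≤ m)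
    (hS : S.Nonempty) (hSn : #S ≤ n * (m + 1) + 1) :
    ∃ u ≠ 0, polyWt (u ᵥ* G) + (#S - 1) ≤ n * (m + 1) := by
  obtain ⟨T, hT, hTcard⟩ := exists_subset_card_eq
    (s := univ.sigma fun _ : Fin n => range (m + 1)) (n := #S - 1) (by
      simp only [card_sigma, card_range, sum_const, card_univ, Fintype.card_fin, smul_eq_mul]
      omega)
  -- The identity block forces `c` to vanish off `S`.
  let A : Matrix (Fin k) ((Sᶜ : Finset (Fin k)) ⊕ T) F :=
    fromCols ((1 : Matrix (Fin k) (Fin k) F).submatrix id Subtype.val)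
      (of fun i (p : T) => (G i p.1.1).coeff p.1.2)
  obtain ⟨c, hc0, hcA⟩ := A.exists_ne_zero_vecMul_eq_zero (by
    have := hS.card_pos
    have := S.card_le_univ
    simp only [Fintype.card_fin] at this
    simp only [Fintype.card_sum, Fintype.card_coe, card_compl, Fintype.card_fin]
    omega)
  have hc_off : ∀ i ∉ S, c i = 0 := fun i hi => by
    simpa [A, vecMul, dotProduct, one_apply] using congrFun hcA (Sum.inl ⟨i, mem_compl.mpr hi⟩)
  have hc_T : ∀ p ∈ T, ∑ i, c i * (G i p.1).coeff p.2 = 0 := fun p hp => by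
    simpa [A, vecMul, dotProduct] using congrFun hcA (Sum.inr ⟨p, hp⟩)
  refine ⟨fun i => C (c i), fun h => hc0 (funext fun i => by simpa using congrFun h i), ?_⟩
  rw [← hTcard]
  refine polyWt_add_card_le (fun j => ?_) hT fun p hp => by rw [coeff_C_vecMul]; exact hc_T p hp
  show (∑ i, C (c i) * G i j).natDegree ≤ m
  refine natDegree_sum_le_of_forall_le _ _ fun i _ => ?_
  by_cases hi : i ∈ S
  · exact (natDegree_C_mul_le _ _).trans ((natDegree_le_rowDeg G i j).trans (hdeg i hi))
  · simp [hc_off i hi]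

section Counting

variable {ι : Type*} [Fintype ι] {ν : ι → ℕ} {a r : ℕ}

theorem sum_tsub_eq_of_sum_eq (hge : ∀ i, a ≤ ν i) (hsum : ∑ i, ν i = a * Fintype.card ι + r) :
    ∑ i, (ν i - a) = r := by
  rw [sum_tsub_distrib _ fun i _ => hge i, hsum]
  simp [mul_comm]

theorem card_filter_ne_le (hge : ∀ i, a ≤ ν i) (hsum : ∑ i, ν i = a * Fintype.card ι + r) :
    #{i | ν i ≠ a} ≤ r :=
  calc #{i | ν i ≠ a} = ∑ i ∈ {i | ν i ≠ a}, 1 := card_eq_sum_ones _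
    _ ≤ ∑ i ∈ {i | ν i ≠ a}, (ν i - a) := sum_le_sum fun i hi => by
        have := hge i
        have := (mem_filter.mp hi).2
        omega
    _ ≤ ∑ i, (ν i - a) := sum_le_sum_of_subset (filter_subset _ _)
    _ = r := sum_tsub_eq_of_sum_eq hge hsum

theorem card_le_card_filter_eq_add (hge : ∀ i, a ≤ ν i)
    (hsum : ∑ i, ν i = a * Fintype.card ι + r) : Fintype.card ι ≤ #{i | ν i = a} + r := by
  have := card_filter_add_card_filter_not (s := univ) (fun i => ν i = a)
  have := card_filter_ne_le hge hsum
  simp only [ne_eq] at this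
  rw [card_univ] at *
  omega

theorem card_filter_eq_of_card_filter_eq_add_le (hge : ∀ i, a ≤ ν i)
    (hsum : ∑ i, ν i = a * Fintype.card ι + r) (hcard : #{i | ν i = a} + r ≤ Fintype.card ι) :
    #{i | ν i = a} = Fintype.card ι - r ∧ #{i | ν i = a + 1} = r := by
  have hsplit := card_filter_add_card_filter_not (s := univ) (fun i => ν i = a)
  have hle := card_filter_ne_le hge hsum
  simp only [ne_eq] at hle ⊢
  rw [card_univ] at hsplit
  have hne : #{i | ¬ν i = a} = r := by omega
  refine ⟨by omega, ?_⟩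
  have hexcess : ∀ i ∈ ({i | ν i ≠ a} : Finset ι), 1 = ν i - a := by
    refine (sum_eq_sum_iff_of_le fun i hi => ?_).mp ?_
    · have := hge i
      have := (mem_filter.mp hi).2
      omega
    · rw [← card_eq_sum_ones, hne, sum_filter_of_ne fun i _ h => by omega,
        sum_tsub_eq_of_sum_eq hge hsum]
  rw [← hne]
  congr 1
  ext i
  have := hexcess i
  have := hge i
  simp only [mem_filter, mem_univ, true_and] at *
  omega

end Counting

theorem mds_forney_indices_general
    {F : Type*} [Field F] {k n : ℕ}
    (hkn : k < n)
    (G : Matrix (Fin k) (Fin n) (Polynomial F))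
    (ν : Fin k → ℕ) (hν : ∀ r, ν r = rowDeg G r)
    (δ : ℕ) (hδ : δ = ∑ r, ν r)
    (d : ℕ)
    (hd : IsLeast {w : ℕ | ∃ u : Fin k → Polynomial F,
      u ≠ 0 ∧ w = polyWt (Matrix.vecMul u G)} d)
    (hMDS : d = (n - k) * (δ / k + 1) + δ + 1)
    (a r : ℕ) (ha : δ = a * k + r) (hr : r < k) :
    (Finset.univ.filter fun i : Fin k => ν i = a).card = k - r ∧
    (Finset.univ.filter fun i : Fin k => ν i = a + 1).card = r := by
  obtain rfl : ν = rowDeg G := funext hν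
  have hle : ∀ u : Fin k → F[X], u ≠ 0 → d ≤ polyWt (u ᵥ* G) := fun u hu => hd.2 ⟨u, hu, rfl⟩
  have hdk : d + k = n * (a + 1) + r + 1 := by
    have hdiv : δ / k = a := by
      rw [ha, mul_comm, Nat.mul_add_div (by omega), Nat.div_eq_of_lt hr, add_zero]
    have := Nat.sub_add_cancel hkn.le
    rw [hMDS, hdiv, ha]
    nlinarith
  have hsum : ∑ i, rowDeg G i = a * Fintype.card (Fin k) + r := by
    rw [Fintype.card_fin, ← hδ, ha]
  have hge : ∀ i, a ≤ rowDeg G i := fun i => by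
    have := le_mul_rowDeg_succ_of_forall_le_polyWt hle i
    have : n * a < n * (rowDeg G i + 1) := by rw [Nat.mul_succ] at hdk; omega
    exact Nat.lt_succ_iff.mp (Nat.lt_of_mul_lt_mul_left this)
  have hS := card_le_card_filter_eq_add hge hsum
  have hSk : #{i | rowDeg G i = a} ≤ k := by simpa using card_filter_le univ (rowDeg G · = a)
  have hn : n ≤ n * (a + 1) := Nat.le_mul_of_pos_right n a.succ_pos
  rw [Fintype.card_fin] at hS
  obtain ⟨u, hu, hw⟩ := exists_ne_zero_polyWt_vecMul_add_card_le G (m := a)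
    (S := {i | rowDeg G i = a}) (fun i hi => (mem_filter.mp hi).2.le) (card_pos.mp (by omega))
    (by omega)
  simpa using card_filter_eq_of_card_filter_eq_add_le hge hsum (by
    have := hle u hu
    rw [Fintype.card_fin]
    omega)

/-- **Forney indices of an MDS convolutional code.**
Let `F_q` be a finite field, `G ∈ F_q[z]^{k×n}` (`1 ≤ k < n`) right invertible and
minimal with row degrees `ν` and complexity `δ = ∑ ν r`, and suppose the free distance
equals the generalized Singleton bound `S(n,k,δ) = (n-k)(⌊δ/k⌋+1)+δ+1`.  Write
`δ = a·k + r` with `a ≥ 0` and `0 ≤ r ≤ k-1`.  Then exactly `k - r` of the Forney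
indices equal `a` and exactly `r` of them equal `a + 1`. -/
theorem mds_forney_indices
    {F : Type*} [Field F] [Fintype F] {k n : ℕ}
    (hk : 1 ≤ k) (hkn : k < n)
    (G : Matrix (Fin k) (Fin n) (Polynomial F))
    (hright : ∃ H : Matrix (Fin n) (Fin k) (Polynomial F), G * H = 1)
    (ν : Fin k → ℕ) (hν : ∀ r, ν r = rowDeg G r)
    (δ : ℕ) (hδ : δ = ∑ r, ν r)
    (hminimal : complexity G = δ)
    (d : ℕ)
    (hd : IsLeast {w : ℕ | ∃ u : Fin k → Polynomial F,
      u ≠ 0 ∧ w = polyWt (Matrix.vecMul u G)} d)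
    (hMDS : d = (n - k) * (δ / k + 1) + δ + 1)
    (a r : ℕ) (ha : δ = a * k + r) (hr : r < k) :
    (Finset.univ.filter fun i : Fin k => ν i = a).card = k - r ∧
    (Finset.univ.filter fun i : Fin k => ν i = a + 1).card = r :=
  mds_forney_indices_general hkn G ν hν δ hδ d hd hMDS a r ha hr
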